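/- arXiv:1609.06961 — 3 statements merged into one kernel-verified Lean document; each statement's English description precedes it below -/
import Mathlib

section
/- A graph G is localizable if and only if G is well-covered and θ(G) = α(G), where θ(G) is the clique cover number and α(G) the independence number. -/
variable {V : Type*} [Fintype V] [DecidableEq V]

/-- `S` is an independent set in `G`. -/
def IsIndep (G : SimpleGraph V) (S : Finset V) : Prop :=
  ∀ ⦃u⦄, u ∈ S → ∀ ⦃v⦄, v ∈ S → ¬ G.Adj u v

/-- `S` is a maximal independent set in `G`. -/
def MaxIndep (G : SimpleGraph V) (S : Finset V) : Prop :=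
  IsIndep G S ∧ ∀ T, IsIndep G T → S ⊆ T → T = S

/-- `C` is a strong clique in `G`: a clique meeting every maximal independent set. -/
def IsStrongClique (G : SimpleGraph V) (C : Finset V) : Prop :=
  G.IsClique ↑C ∧ ∀ S, MaxIndep G S → (C ∩ S).Nonempty

/-- `G` is localizable: its vertex set partitions into strong cliques. -/
def Localizable (G : SimpleGraph V) : Prop :=
  ∃ (k : ℕ) (C : Fin k → Finset V), (∀ j, IsStrongClique G (C j)) ∧ ∀ v, ∃! j, v ∈ C j

/-- The independence number `α(G)`. -/
noncomputable def alpha (G : SimpleGraph V) : ℕ :=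
  sSup {n | ∃ S : Finset V, IsIndep G S ∧ S.card = n}

/-- The independent domination number `i(G)`. -/
noncomputable def indomNum (G : SimpleGraph V) : ℕ :=
  sInf {n | ∃ S : Finset V, MaxIndep G S ∧ S.card = n}

/-- The clique cover number `θ(G)`. -/
noncomputable def theta (G : SimpleGraph V) : ℕ :=
  sInf {n | ∃ C : Fin n → Finset V, (∀ j, G.IsClique ↑(C j)) ∧ ∀ v, ∃! j, v ∈ C j}

/-- `G` is well-covered: all maximal independent sets have the same size. -/
def WellCovered (G : SimpleGraph V) : Prop :=
  ∀ S T, MaxIndep G S → MaxIndep G T → S.card = T.card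

/-! Both directions count a maximal independent set `S` against a partition of `V` into `k`
cliques: `S` meets each clique at most once, so `|S| ≤ k`, with equality exactly when `S` meets
every clique. Hence strong cliques force every maximal independent set to have size `k`, and
conversely, when all maximal independent sets have size `α = θ`, every clique of a minimum cover
is strong. -/

open scoped Finset

variable {G : SimpleGraph V}

lemma IsIndep.card_inter_le_one {C S : Finset V} (hS : IsIndep G S) (hC : G.IsClique ↑C) :
    #(C ∩ S) ≤ 1 := by
  rw [Finset.card_le_one]
  intro a ha b hb
  rw [Finset.mem_inter] at ha hb
  by_contra hne
  exact hS ha.2 hb.2 (hC ha.1 hb.1 hne)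

lemma exists_maxIndep_superset {S : Finset V} (hS : IsIndep G S) : ∃ T, MaxIndep G T ∧ S ⊆ T := by
  classical
  obtain ⟨T, hT, hT_max⟩ := ({T | IsIndep G T ∧ S ⊆ T} : Finset (Finset V)).exists_max_image
    Finset.card ⟨S, Finset.mem_filter.mpr ⟨Finset.mem_univ S, hS, subset_rfl⟩⟩
  simp only [Finset.mem_filter, Finset.mem_univ, true_and] at hT hT_max
  refine ⟨T, ⟨hT.1, fun T' hT' hTT' => ?_⟩, hT.2⟩
  exact (Finset.eq_of_subset_of_card_le hTT' (hT_max T' ⟨hT', hT.2.trans hTT'⟩)).symm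

lemma sum_card_inter_of_partition {k : ℕ} {C : Fin k → Finset V} (hpart : ∀ v, ∃! j, v ∈ C j)
    (S : Finset V) : ∑ j, #(C j ∩ S) = #S := by
  choose part hpart_mem hpart_uniq using hpart
  rw [Finset.card_eq_sum_card_fiberwise (f := part) (t := Finset.univ) (by simp)]
  refine Finset.sum_congr rfl fun j _ => congrArg Finset.card ?_
  ext v
  simp only [Finset.mem_inter, Finset.mem_filter]
  exact ⟨fun ⟨hvC, hvS⟩ => ⟨hvS, (hpart_uniq v j hvC).symm⟩,
    fun ⟨hvS, hv⟩ => ⟨hv ▸ hpart_mem v, hvS⟩⟩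

section CliquePartition

variable {k : ℕ} {C : Fin k → Finset V} (hcl : ∀ j, G.IsClique ↑(C j))
  (hpart : ∀ v, ∃! j, v ∈ C j)
include hcl hpart

lemma IsIndep.card_le_of_cliquePartition {S : Finset V} (hS : IsIndep G S) : #S ≤ k := by
  calc #S = ∑ j, #(C j ∩ S) := (sum_card_inter_of_partition hpart S).symm
    _ ≤ ∑ _j : Fin k, 1 := Finset.sum_le_sum fun j _ => hS.card_inter_le_one (hcl j)
    _ = k := by simp

lemma IsIndep.inter_nonempty_of_card_eq {S : Finset V} (hS : IsIndep G S) (hSk : #S = k)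
    (j : Fin k) : (C j ∩ S).Nonempty := by
  have hsum : ∑ i, #(C i ∩ S) = ∑ _i : Fin k, 1 := by
    simp [sum_card_inter_of_partition hpart S, hSk]
  have hone := (Finset.sum_eq_sum_iff_of_le fun i _ => hS.card_inter_le_one (hcl i)).mp hsum
  exact Finset.card_pos.mp (by simp [hone j (Finset.mem_univ j)])

end CliquePartition

lemma MaxIndep.card_eq_of_strongCliquePartition {k : ℕ} {C : Fin k → Finset V}
    (hstrong : ∀ j, IsStrongClique G (C j)) (hpart : ∀ v, ∃! j, v ∈ C j) {S : Finset V}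
    (hS : MaxIndep G S) : #S = k := by
  calc #S = ∑ j, #(C j ∩ S) := (sum_card_inter_of_partition hpart S).symm
    _ = ∑ _j : Fin k, 1 := Finset.sum_congr rfl fun j _ =>
        le_antisymm (hS.1.card_inter_le_one (hstrong j).1)
          (Finset.card_pos.mpr ((hstrong j).2 S hS))
    _ = k := by simp

lemma IsIndep.card_le_alpha {S : Finset V} (hS : IsIndep G S) : #S ≤ alpha G :=
  le_csSup ⟨Fintype.card V, by rintro n ⟨T, -, rfl⟩; exact Finset.card_le_univ T⟩ ⟨S, hS, rfl⟩

lemma exists_maxIndep_card_eq_alpha (G : SimpleGraph V) : ∃ S, MaxIndep G S ∧ #S = alpha G := by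
  have hne : {n | ∃ S : Finset V, IsIndep G S ∧ #S = n}.Nonempty := ⟨0, ∅, by simp [IsIndep], rfl⟩
  have hbdd : BddAbove {n | ∃ S : Finset V, IsIndep G S ∧ #S = n} :=
    ⟨Fintype.card V, by rintro n ⟨T, -, rfl⟩; exact Finset.card_le_univ T⟩
  obtain ⟨S, hS, hS_card⟩ := Nat.sSup_mem hne hbdd
  obtain ⟨T, hT, hST⟩ := exists_maxIndep_superset hS
  exact ⟨T, hT, le_antisymm hT.1.card_le_alpha (hS_card.symm.trans_le (Finset.card_le_card hST))⟩

lemma exists_cliquePartition_theta (G : SimpleGraph V) :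
    ∃ C : Fin (theta G) → Finset V, (∀ j, G.IsClique ↑(C j)) ∧ ∀ v, ∃! j, v ∈ C j := by
  refine Nat.sInf_mem (s := {n | ∃ C : Fin n → Finset V, (∀ j, G.IsClique ↑(C j)) ∧
    ∀ v, ∃! j, v ∈ C j}) ⟨Fintype.card V, fun j => {(Fintype.equivFin V).symm j},
    fun j => by simp, fun v => ⟨Fintype.equivFin V v, by simp, fun j hj => ?_⟩⟩
  simp [Finset.mem_singleton.mp hj]

lemma alpha_le_theta (G : SimpleGraph V) : alpha G ≤ theta G := by
  obtain ⟨S, hS, hS_card⟩ := exists_maxIndep_card_eq_alpha G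
  obtain ⟨C, hcl, hpart⟩ := exists_cliquePartition_theta G
  exact hS_card ▸ hS.1.card_le_of_cliquePartition hcl hpart

theorem localizable_iff_wellCovered_and_semiPerfect (G : SimpleGraph V) :
    Localizable G ↔ WellCovered G ∧ theta G = alpha G := by
  obtain ⟨T, hT, hT_card⟩ := exists_maxIndep_card_eq_alpha G
  constructor
  · rintro ⟨k, C, hstrong, hpart⟩
    have hcard := fun S (hS : MaxIndep G S) => hS.card_eq_of_strongCliquePartition hstrong hpart
    have htheta_le : theta G ≤ k := Nat.sInf_le ⟨C, fun j => (hstrong j).1, hpart⟩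
    refine ⟨fun S S' hS hS' => (hcard S hS).trans (hcard S' hS').symm, ?_⟩
    have hk : k = alpha G := (hcard T hT).symm.trans hT_card
    exact le_antisymm (hk ▸ htheta_le) (alpha_le_theta G)
  · rintro ⟨hwc, htheta⟩
    obtain ⟨C, hcl, hpart⟩ := exists_cliquePartition_theta G
    refine ⟨theta G, C, fun j => ⟨hcl j, fun S hS => ?_⟩, hpart⟩
    have hS_card : #S = theta G := by rw [hwc S T hS hT, hT_card, htheta]
    exact hS.1.inter_nonempty_of_card_eq hcl hpart hS_card j
end

section
/- A triangle T in a graph H is strong (every maximal matching of H contains an edge of T) if and only if T is not contained in any bull, where a bull consists of T together with two disjoint edges each incident to a distinct vertex of T and otherwise disjoint from T. -/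
/-! If a bull has pendant edges `xd` and `ye`, extend them to a maximal matching: every edge of
the triangle meets `x` or `y`, so none of them fits. Conversely, a maximal matching `M` avoiding
the triangle covers at least two of its vertices (otherwise a triangle edge could be added), and
the `M`-edges at these two vertices leave the triangle, so they form a bull. -/

variable {V : Type*} [Fintype V] [DecidableEq V]

/-- `M` is a matching in `H`: a set of pairwise disjoint edges. -/
def IsMatching (H : SimpleGraph V) (M : Set (Sym2 V)) : Prop :=
  M ⊆ H.edgeSet ∧ ∀ e ∈ M, ∀ f ∈ M, e ≠ f → ∀ v : V, ¬ (v ∈ e ∧ v ∈ f)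

/-- `M` is a maximal matching in `H`. -/
def IsMaximalMatching (H : SimpleGraph V) (M : Set (Sym2 V)) : Prop :=
  IsMatching H M ∧ ∀ M', IsMatching H M' → M ⊆ M' → M' = M

/-- The matching `M` covers the vertex `v`. -/
def MatchCovers (M : Set (Sym2 V)) (v : V) : Prop := ∃ e ∈ M, v ∈ e

/-- A vertex is strong if it is covered by every maximal matching. -/
def StrongVertex (H : SimpleGraph V) (u : V) : Prop :=
  ∀ M, IsMaximalMatching H M → MatchCovers M u

/-- The triangle on vertices `a`, `b`, `c` is strong: every maximal matching
contains one of its edges. -/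
def StrongTriangle (H : SimpleGraph V) (a b c : V) : Prop :=
  ∀ M, IsMaximalMatching H M → ∃ e ∈ M, e = s(a, b) ∨ e = s(b, c) ∨ e = s(a, c)

section
omit [Fintype V] [DecidableEq V]

variable {H : SimpleGraph V} {M : Set (Sym2 V)}

theorem exists_isMaximalMatching_superset {M₀ : Set (Sym2 V)} (h₀ : IsMatching H M₀) :
    ∃ M, M₀ ⊆ M ∧ IsMaximalMatching H M := by
  obtain ⟨M, hM₀M, hM, hmax⟩ := zorn_subset_nonempty {M | IsMatching H M}
    (fun C hC hchain _ => by
      refine ⟨⋃₀ C, ⟨?_, ?_⟩, fun _ => Set.subset_sUnion_of_mem⟩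
      · rintro e ⟨N, hN, heN⟩
        exact (hC hN).1 heN
      · rintro e ⟨N, hN, heN⟩ f ⟨N', hN', hfN'⟩
        rcases hchain.total hN hN' with hNN' | hN'N
        · exact (hC hN').2 e (hNN' heN) f hfN'
        · exact (hC hN).2 e heN f (hN'N hfN')) M₀ h₀
  exact ⟨M, hM₀M, hM, fun M' hM' hMM' => (hmax hM' hMM').antisymm hMM'⟩

theorem IsMatching.eq_of_mem_of_mem (hM : IsMatching H M) {e f : Sym2 V} (he : e ∈ M)
    (hf : f ∈ M) {v : V} (hve : v ∈ e) (hvf : v ∈ f) : e = f := by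
  by_contra hef
  exact hM.2 e he f hf hef v ⟨hve, hvf⟩

theorem IsMatching.insert (hM : IsMatching H M) {u v : V} (huv : H.Adj u v)
    (hu : ¬ MatchCovers M u) (hv : ¬ MatchCovers M v) : IsMatching H (insert s(u, v) M) := by
  refine ⟨Set.insert_subset huv hM.1, ?_⟩
  have fresh : ∀ f ∈ M, ∀ w ∈ s(u, v), w ∉ f := by
    rintro f hf w hw hwf
    rcases Sym2.mem_iff.mp hw with rfl | rfl
    exacts [hu ⟨f, hf, hwf⟩, hv ⟨f, hf, hwf⟩]
  rintro e (rfl | he) f (rfl | hf) hef w ⟨hwe, hwf⟩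
  · exact hef rfl
  · exact fresh f hf w hwe hwf
  · exact fresh e he w hwf hwe
  · exact hM.2 e he f hf hef w ⟨hwe, hwf⟩

theorem isMatching_singleton {u v : V} (huv : H.Adj u v) : IsMatching H {s(u, v)} :=
  ⟨Set.singleton_subset_iff.mpr huv, fun _ he _ hf hef => absurd (he.trans hf.symm) hef⟩

theorem isMatching_pair {x y d e : V} (hxd : H.Adj x d) (hye : H.Adj y e) (hxy : x ≠ y)
    (hxe : x ≠ e) (hdy : d ≠ y) (hde : d ≠ e) : IsMatching H {s(x, d), s(y, e)} :=
  (isMatching_singleton hye).insert hxd (by simp [MatchCovers, hxy, hxe])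
    (by simp [MatchCovers, hdy, hde])

theorem IsMaximalMatching.matchCovers_or_matchCovers (hM : IsMaximalMatching H M) {u v : V}
    (huv : H.Adj u v) : MatchCovers M u ∨ MatchCovers M v := by
  by_contra! ⟨hu, hv⟩
  have huvM : s(u, v) ∈ M :=
    hM.2 _ (hM.1.insert huv hu hv) (Set.subset_insert _ _) ▸ Set.mem_insert _ _
  exact hu ⟨_, huvM, Sym2.mem_mk_left u v⟩

variable {a b c : V}

theorem mem_triangle_of_mem_edge {t : Sym2 V} (ht : t = s(a, b) ∨ t = s(b, c) ∨ t = s(a, c))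
    {u : V} (hu : u ∈ t) : u ∈ ({a, b, c} : Set V) := by
  rcases ht with rfl | rfl | rfl <;> rcases Sym2.mem_iff.mp hu with rfl | rfl <;> simp

theorem mem_edge_or_mem_edge_of_triangle {t : Sym2 V}
    (ht : t = s(a, b) ∨ t = s(b, c) ∨ t = s(a, c))
    {x y : V} (hx : x ∈ ({a, b, c} : Set V)) (hy : y ∈ ({a, b, c} : Set V)) (hxy : x ≠ y) :
    x ∈ t ∨ y ∈ t := by
  rcases ht with rfl | rfl | rfl <;> rcases hx with rfl | rfl | rfl <;>
    rcases hy with rfl | rfl | rfl <;> simp_all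

theorem triangle_edge_of_mem {x y : V} (hx : x ∈ ({a, b, c} : Set V))
    (hy : y ∈ ({a, b, c} : Set V)) (hxy : x ≠ y) :
    s(x, y) = s(a, b) ∨ s(x, y) = s(b, c) ∨ s(x, y) = s(a, c) := by
  rcases hx with rfl | rfl | rfl <;> rcases hy with rfl | rfl | rfl <;> simp_all [Sym2.eq_swap]

theorem IsMaximalMatching.exists_two_matchCovers_of_triangle (hM : IsMaximalMatching H M)
    (hab : H.Adj a b) (hbc : H.Adj b c) (hac : H.Adj a c) :
    ∃ x ∈ ({a, b, c} : Set V), ∃ y ∈ ({a, b, c} : Set V),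
      x ≠ y ∧ MatchCovers M x ∧ MatchCovers M y := by
  by_cases ha : MatchCovers M a
  · rcases hM.matchCovers_or_matchCovers hbc with hb | hc
    · exact ⟨a, by simp, b, by simp, hab.ne, ha, hb⟩
    · exact ⟨a, by simp, c, by simp, hac.ne, ha, hc⟩
  · exact ⟨b, by simp, c, by simp, hbc.ne, (hM.matchCovers_or_matchCovers hab).resolve_left ha,
      (hM.matchCovers_or_matchCovers hac).resolve_left ha⟩

theorem IsMatching.exists_mem_not_mem_triangle (hM : IsMatching H M)
    (hno : ¬ ∃ t ∈ M, t = s(a, b) ∨ t = s(b, c) ∨ t = s(a, c)) {x : V}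
    (hx : x ∈ ({a, b, c} : Set V)) (hcx : MatchCovers M x) :
    ∃ d ∉ ({a, b, c} : Set V), s(x, d) ∈ M := by
  obtain ⟨f, hfM, hxf⟩ := hcx
  obtain ⟨d, rfl⟩ := Sym2.mem_iff_exists.mp hxf
  exact ⟨d, fun hd => hno ⟨_, hfM, triangle_edge_of_mem hx hd (hM.1 hfM).ne⟩, hfM⟩

theorem StrongTriangle.not_bull (hT : StrongTriangle H a b c) {x y d e : V}
    (hx : x ∈ ({a, b, c} : Set V)) (hy : y ∈ ({a, b, c} : Set V)) (hxy : x ≠ y)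
    (hd : d ∉ ({a, b, c} : Set V)) (he : e ∉ ({a, b, c} : Set V)) (hde : d ≠ e)
    (hxd : H.Adj x d) (hye : H.Adj y e) : False := by
  obtain ⟨M, hpair, hM⟩ := exists_isMaximalMatching_superset <|
    isMatching_pair hxd hye hxy (ne_of_mem_of_not_mem hx he) (ne_of_mem_of_not_mem hy hd).symm hde
  obtain ⟨t, htM, ht⟩ := hT M hM
  -- `t` meets `x` or `y`, so it would be `s(x, d)` or `s(y, e)`, which leave the triangle.
  have leaves : ∀ {z w}, s(z, w) ∈ M → w ∉ ({a, b, c} : Set V) → z ∉ t := by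
    intro z w hzw hw hz
    have htzw : t = s(z, w) := hM.1.eq_of_mem_of_mem htM hzw hz (Sym2.mem_mk_left z w)
    exact hw (mem_triangle_of_mem_edge ht (htzw ▸ Sym2.mem_mk_right z w))
  rcases mem_edge_or_mem_edge_of_triangle ht hx hy hxy with hxt | hyt
  · exact leaves (hpair (by simp)) hd hxt
  · exact leaves (hpair (by simp)) he hyt

end

theorem strong_triangle_iff_no_bull (H : SimpleGraph V) (a b c : V)
    (hab : H.Adj a b) (hbc : H.Adj b c) (hac : H.Adj a c) :
    StrongTriangle H a b c ↔
      ¬ ∃ x y d e : V, x ∈ ({a, b, c} : Set V) ∧ y ∈ ({a, b, c} : Set V) ∧ x ≠ y ∧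
        d ∉ ({a, b, c} : Set V) ∧ e ∉ ({a, b, c} : Set V) ∧ d ≠ e ∧
        H.Adj x d ∧ H.Adj y e := by
  refine ⟨fun hT ⟨x, y, d, e, hx, hy, hxy, hd, he, hde, hxd, hye⟩ =>
    hT.not_bull hx hy hxy hd he hde hxd hye, fun hnobull M hM => ?_⟩
  by_contra hno
  obtain ⟨x, hx, y, hy, hxy, hcx, hcy⟩ := hM.exists_two_matchCovers_of_triangle hab hbc hac
  obtain ⟨d, hd, hxd⟩ := hM.1.exists_mem_not_mem_triangle hno hx hcx
  obtain ⟨e, he, hye⟩ := hM.1.exists_mem_not_mem_triangle hno hy hcy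
  have hde : d ≠ e := by
    rintro rfl
    exact hxy <| Sym2.congr_left.mp <|
      hM.1.eq_of_mem_of_mem hxd hye (Sym2.mem_mk_right x d) (Sym2.mem_mk_right y d)
  exact hnobull ⟨x, y, d, e, hx, hy, hxy, hd, he, hde, hM.1.1 hxd, hM.1.1 hye⟩
end

section
/- The line graph L(H) of a graph H is localizable if and only if H contains an independent set S of strong vertices and a set of strong triangles that decomposes H − S (each edge of H − S lies in exactly one of these triangles). -/
variable {V : Type*} [Fintype V] [DecidableEq V]

section SetVersion

variable {W : Type*}

/-- `S` is an independent set in `G` (set version). -/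
def IsIndepSet (G : SimpleGraph W) (S : Set W) : Prop :=
  ∀ u ∈ S, ∀ v ∈ S, ¬ G.Adj u v

/-- `S` is a maximal independent set in `G` (set version). -/
def MaxIndepSet (G : SimpleGraph W) (S : Set W) : Prop :=
  IsIndepSet G S ∧ ∀ T, IsIndepSet G T → S ⊆ T → T = S

/-- `K` is a strong clique in `G` (set version). -/
def StrongCliqueSet (G : SimpleGraph W) (K : Set W) : Prop :=
  G.IsClique K ∧ ∀ S, MaxIndepSet G S → (K ∩ S).Nonempty

/-- `G` is localizable: its vertex set partitions into strong cliques (set version). -/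
def LocalizableSet (G : SimpleGraph W) : Prop :=
  ∃ P : Set (Set W), (∀ K ∈ P, StrongCliqueSet G K) ∧ ∀ v, ∃! K, K ∈ P ∧ v ∈ K

end SetVersion

/-! Maximal independent sets of `L(H)` are exactly the maximal matchings of `H`, so a clique of
`L(H)` is strong iff every maximal matching of `H` meets it. Pairwise intersecting edges either
share a vertex or form a triangle, and a strong clique inside a star is the whole star (extend any
of its edges to a maximal matching). Hence the strong cliques of `L(H)` are the full stars of strong
vertices and the edge sets of strong triangles; since the classes of a partition are edge-disjoint,
the star centres are independent and the triangle classes decompose the remaining edges. -/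

section LineGraph

variable {α : Type*} {G : SimpleGraph α}

theorem IsMatching.exists_isMaximalMatching_superset {M : Set (Sym2 α)} (hM : IsMatching G M) :
    ∃ M', IsMaximalMatching G M' ∧ M ⊆ M' := by
  obtain ⟨M', hMM', hmax⟩ := zorn_subset_nonempty {N | IsMatching G N}
    (fun c hc hchain _ => ⟨⋃₀ c,
      ⟨Set.sUnion_subset fun N hN => (hc hN).1,
        (Set.pairwise_sUnion hchain.directedOn).2 fun N hN => (hc hN).2⟩,
      fun _ => Set.subset_sUnion_of_mem⟩) M hM
  exact ⟨M', ⟨hmax.prop, fun N hN hsub => (hmax.eq_of_subset hN hsub).symm⟩, hMM'⟩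

theorem exists_isMaximalMatching (G : SimpleGraph α) : ∃ M, IsMaximalMatching G M :=
  (show IsMatching G ∅ by simp [IsMatching]).exists_isMaximalMatching_superset.imp fun _ h => h.1

theorem isIndepSet_lineGraph_iff {S : Set G.edgeSet} :
    IsIndepSet G.lineGraph S ↔ IsMatching G (Subtype.val '' S) := by
  simp [IsIndepSet, IsMatching, SimpleGraph.lineGraph_adj_iff_exists, Subtype.ext_iff]

theorem maxIndepSet_lineGraph_iff {S : Set G.edgeSet} :
    MaxIndepSet G.lineGraph S ↔ IsMaximalMatching G (Subtype.val '' S) := by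
  simp only [MaxIndepSet, IsMaximalMatching, isIndepSet_lineGraph_iff]
  refine and_congr_right fun _ => ⟨fun hmax M hM hSM => ?_, fun hmax T hT hST => ?_⟩
  · have hM' : Subtype.val '' (Subtype.val ⁻¹' M : Set G.edgeSet) = M :=
      Set.image_preimage_eq_of_subset (by rw [Subtype.range_val]; exact hM.1)
    rw [← hM', hmax _ (by rwa [hM']) (Set.image_subset_iff.1 hSM)]
  · exact Subtype.val_injective.image_injective (hmax _ hT (Set.image_mono hST))

theorem IsMaximalMatching.maxIndepSet_lineGraph {M : Set (Sym2 α)} (hM : IsMaximalMatching G M) :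
    MaxIndepSet G.lineGraph (Subtype.val ⁻¹' M) := by
  rwa [maxIndepSet_lineGraph_iff,
    Set.image_preimage_eq_of_subset (by rw [Subtype.range_val]; exact hM.1.1)]

theorem strongCliqueSet_lineGraph_iff {K : Set G.edgeSet} :
    StrongCliqueSet G.lineGraph K ↔
      G.lineGraph.IsClique K ∧ ∀ M, IsMaximalMatching G M → ∃ e ∈ K, (e : Sym2 α) ∈ M := by
  refine and_congr_right fun _ => ⟨fun h M hM => h _ hM.maxIndepSet_lineGraph, fun h S hS => ?_⟩
  obtain ⟨e, heK, f, hfS, hfe⟩ := h _ (maxIndepSet_lineGraph_iff.1 hS)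
  exact ⟨e, heK, Subtype.ext hfe ▸ hfS⟩

def starEdges (G : SimpleGraph α) (a : α) : Set G.edgeSet := {e | a ∈ (e : Sym2 α)}

def edgesIn (G : SimpleGraph α) (T : Set α) : Set G.edgeSet := Subtype.val ⁻¹' T.sym2

@[simp] theorem mem_starEdges {a : α} {e : G.edgeSet} : e ∈ starEdges G a ↔ a ∈ (e : Sym2 α) :=
  Iff.rfl

@[simp] theorem mem_edgesIn {T : Set α} {e : G.edgeSet} : e ∈ edgesIn G T ↔ (e : Sym2 α) ∈ T.sym2 :=
  Iff.rfl

theorem mem_sym2_triple_iff {z : Sym2 α} {a b c : α} (hz : ¬ z.IsDiag) :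
    z ∈ ({a, b, c} : Set α).sym2 ↔ z = s(a, b) ∨ z = s(b, c) ∨ z = s(a, c) := by
  induction z using Sym2.ind with
  | _ x y =>
    simp only [Sym2.mk_isDiag_iff] at hz
    simp only [Set.mk_mem_sym2_iff, Set.mem_insert_iff, Set.mem_singleton_iff, Sym2.eq_iff]
    grind

theorem isClique_starEdges (G : SimpleGraph α) (a : α) : G.lineGraph.IsClique (starEdges G a) :=
  fun _ he _ hf hne => SimpleGraph.lineGraph_adj_iff_exists.2 ⟨hne, a, he, hf⟩

theorem isClique_edgesIn_triple (G : SimpleGraph α) (a b c : α) :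
    G.lineGraph.IsClique (edgesIn G {a, b, c}) := by
  intro e he f hf hne
  refine SimpleGraph.lineGraph_adj_iff_exists.2 ⟨hne, ?_⟩
  rw [mem_edgesIn, mem_sym2_triple_iff (G.not_isDiag_of_mem_edgeSet e.2)] at he
  rw [mem_edgesIn, mem_sym2_triple_iff (G.not_isDiag_of_mem_edgeSet f.2)] at hf
  rcases he with he | he | he <;> rcases hf with hf | hf | hf <;> simp [he, hf]

theorem strongCliqueSet_starEdges_iff {a : α} :
    StrongCliqueSet G.lineGraph (starEdges G a) ↔ StrongVertex G a := by
  rw [strongCliqueSet_lineGraph_iff, and_iff_right (isClique_starEdges G a)]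
  exact forall₂_congr fun M hM =>
    ⟨fun ⟨e, hae, heM⟩ => ⟨e, heM, hae⟩, fun ⟨e, heM, hae⟩ => ⟨⟨e, hM.1.1 heM⟩, hae, heM⟩⟩

theorem strongCliqueSet_edgesIn_triple_iff {a b c : α} :
    StrongCliqueSet G.lineGraph (edgesIn G {a, b, c}) ↔ StrongTriangle G a b c := by
  rw [strongCliqueSet_lineGraph_iff, and_iff_right (isClique_edgesIn_triple G a b c)]
  refine forall₂_congr fun M hM => ⟨fun ⟨e, he, heM⟩ => ⟨e, heM, ?_⟩, fun ⟨e, heM, he⟩ => ?_⟩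
  · exact (mem_sym2_triple_iff (G.not_isDiag_of_mem_edgeSet e.2)).1 he
  · have he' := G.not_isDiag_of_mem_edgeSet (hM.1.1 heM)
    exact ⟨⟨e, hM.1.1 heM⟩, (mem_sym2_triple_iff he').2 he, heM⟩

theorem StrongCliqueSet.nonempty {K : Set G.edgeSet} (hK : StrongCliqueSet G.lineGraph K) :
    K.Nonempty :=
  let ⟨_, hM⟩ := exists_isMaximalMatching G
  let ⟨e, he, _⟩ := (strongCliqueSet_lineGraph_iff.1 hK).2 _ hM
  ⟨e, he⟩

theorem StrongCliqueSet.starEdges_subset {K : Set G.edgeSet} (hK : StrongCliqueSet G.lineGraph K)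
    {a : α} (ha : K ⊆ starEdges G a) : starEdges G a ⊆ K := by
  intro e hae
  have hmatch : IsMatching G {(e : Sym2 α)} :=
    ⟨Set.singleton_subset_iff.2 e.2, Set.pairwise_singleton _ _⟩
  obtain ⟨M, hM, heM⟩ := hmatch.exists_isMaximalMatching_superset
  obtain ⟨f, hfK, hfM⟩ := (strongCliqueSet_lineGraph_iff.1 hK).2 M hM
  have hfe : (f : Sym2 α) = e :=
    by_contra fun hfe => hM.1.2 _ hfM _ (heM rfl) hfe a ⟨ha hfK, hae⟩
  exact Subtype.ext hfe ▸ hfK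

theorem exists_forall_mem_or_eq_triangle {K : Set (Sym2 α)} (hKG : K ⊆ G.edgeSet)
    (hne : K.Nonempty) (hK : K.Pairwise fun e f => ∃ v ∈ e, v ∈ f) :
    (∃ a, ∀ e ∈ K, a ∈ e) ∨
      ∃ a b c, G.Adj a b ∧ G.Adj b c ∧ G.Adj a c ∧ K = {s(a, b), s(b, c), s(a, c)} := by
  refine or_iff_not_imp_left.2 fun hstar => ?_
  push Not at hstar
  have meet : ∀ {x y f}, s(x, y) ∈ K → f ∈ K → x ∉ f → y ∈ f := by
    intro x y f hxy hf hx
    obtain ⟨v, hv, hvf⟩ := hK hxy hf (by rintro rfl; exact hx (Sym2.mem_mk_left x y))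
    rcases Sym2.mem_iff.1 hv with rfl | rfl
    exacts [absurd hvf hx, hvf]
  obtain ⟨e, he⟩ := hne
  induction e using Sym2.ind with | _ a b => ?_
  obtain ⟨e₂, he₂, ha₂⟩ := hstar a
  obtain ⟨c, rfl⟩ := Sym2.mem_iff_exists.1 (meet he he₂ ha₂)
  obtain ⟨e₃, he₃, hb₃⟩ := hstar b
  have hab : a ≠ b := (hKG he).ne
  have hac : a ≠ c := fun h => ha₂ (h ▸ Sym2.mem_mk_right b a)
  have hbc : b ≠ c := (hKG he₂).ne
  obtain rfl : e₃ = s(a, c) := (Sym2.mem_and_mem_iff hac).1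
    ⟨meet (Sym2.eq_swap ▸ he) he₃ hb₃, meet he₂ he₃ hb₃⟩
  refine ⟨a, b, c, hKG he, hKG he₂, hKG he₃, Set.Subset.antisymm (fun f hf => ?_) ?_⟩
  · by_cases haf : a ∈ f
    · by_cases hbf : b ∈ f
      · exact .inl ((Sym2.mem_and_mem_iff hab).1 ⟨haf, hbf⟩)
      · exact .inr (.inr ((Sym2.mem_and_mem_iff hac).1 ⟨haf, meet he₂ hf hbf⟩))
    · exact .inr (.inl ((Sym2.mem_and_mem_iff hbc).1 ⟨meet he hf haf, meet he₃ hf haf⟩))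
  · simp only [Set.insert_subset_iff, Set.singleton_subset_iff]
    exact ⟨he, he₂, he₃⟩

theorem StrongCliqueSet.eq_starEdges_or_eq_edgesIn_triangle {K : Set G.edgeSet}
    (hK : StrongCliqueSet G.lineGraph K) :
    (∃ a, K = starEdges G a) ∨
      ∃ a b c, G.Adj a b ∧ G.Adj b c ∧ G.Adj a c ∧ K = edgesIn G {a, b, c} := by
  have hpair : (Subtype.val '' K).Pairwise fun e f => ∃ v ∈ e, v ∈ f := by
    rintro _ ⟨e, he, rfl⟩ _ ⟨f, hf, rfl⟩ hne
    exact (SimpleGraph.lineGraph_adj_iff_exists.1 (hK.1 he hf (ne_of_apply_ne _ hne))).2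
  rcases exists_forall_mem_or_eq_triangle (Subtype.coe_image_subset _ K) (hK.nonempty.image _)
    hpair with ⟨a, ha⟩ | ⟨a, b, c, hab, hbc, hac, hKabc⟩
  · have hKa : K ⊆ starEdges G a := fun e he => ha _ (Set.mem_image_of_mem _ he)
    exact .inl ⟨a, hKa.antisymm (hK.starEdges_subset hKa)⟩
  · refine .inr ⟨a, b, c, hab, hbc, hac, Set.ext fun e => ?_⟩
    rw [mem_edgesIn, mem_sym2_triple_iff (G.not_isDiag_of_mem_edgeSet e.2),
      ← Subtype.val_injective.mem_set_image, hKabc]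
    rfl

theorem starEdges_ne_edgesIn_triangle {a b c : α} (hab : G.Adj a b) (hbc : G.Adj b c)
    (hac : G.Adj a c) (x : α) : starEdges G x ≠ edgesIn G {a, b, c} := by
  intro h
  have hmem : ∀ u v (huv : G.Adj u v), u ∈ ({a, b, c} : Set α) → v ∈ ({a, b, c} : Set α) →
      x ∈ s(u, v) := fun u v huv hu hv => by
    have he : (⟨s(u, v), huv⟩ : G.edgeSet) ∈ edgesIn G {a, b, c} := Set.mk_mem_sym2_iff.2 ⟨hu, hv⟩
    rwa [← h, mem_starEdges] at he
  have h₁ := hmem a b hab (by simp) (by simp)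
  have h₂ := hmem b c hbc (by simp) (by simp)
  have h₃ := hmem a c hac (by simp) (by simp)
  simp only [Sym2.mem_iff] at h₁ h₂ h₃
  grind [hab.ne, hbc.ne, hac.ne]

theorem exists_mem_starEdges_mem_edgesIn_triangle {a b c x : α} (hab : G.Adj a b)
    (hbc : G.Adj b c) (hx : x ∈ ({a, b, c} : Set α)) :
    ∃ e, e ∈ starEdges G x ∧ e ∈ edgesIn G {a, b, c} := by
  rcases hx with rfl | rfl | rfl
  exacts [⟨⟨s(x, b), hab⟩, by simp⟩, ⟨⟨s(x, c), hbc⟩, by simp⟩, ⟨⟨s(b, x), hbc⟩, by simp⟩]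

theorem subset_of_edgesIn_subset {T T' : Set α} (hT : ∀ x ∈ T, ∃ y ∈ T, G.Adj x y)
    (h : edgesIn G T ⊆ edgesIn G T') : T ⊆ T' := fun x hx =>
  let ⟨y, hy, hxy⟩ := hT x hx
  (Set.mk_mem_sym2_iff.1 (h (a := ⟨s(x, y), hxy⟩) (Set.mk_mem_sym2_iff.2 ⟨hx, hy⟩))).1

theorem eq_of_edgesIn_triangle_eq {a b c a' b' c' : α} (hab : G.Adj a b) (hbc : G.Adj b c)
    (hac : G.Adj a c) (hab' : G.Adj a' b') (hbc' : G.Adj b' c') (hac' : G.Adj a' c')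
    (h : edgesIn G {a, b, c} = edgesIn G {a', b', c'}) :
    ({a, b, c} : Set α) = {a', b', c'} := by
  have hT : ∀ {a b c : α}, G.Adj a b → G.Adj b c → G.Adj a c →
      ∀ x ∈ ({a, b, c} : Set α), ∃ y ∈ ({a, b, c} : Set α), G.Adj x y := by
    rintro a b c hab hbc hac x (rfl | rfl | rfl)
    exacts [⟨b, by simp, hab⟩, ⟨c, by simp, hbc⟩, ⟨a, by simp, hac.symm⟩]
  exact (subset_of_edgesIn_subset (hT hab hbc hac) h.le).antisymm
    (subset_of_edgesIn_subset (hT hab' hbc' hac') h.ge)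

theorem LocalizableSet.exists_strong_vertices_and_triangles (hL : LocalizableSet G.lineGraph) :
    ∃ S : Set α,
      (∀ u ∈ S, ∀ v ∈ S, ¬ G.Adj u v) ∧
      (∀ u ∈ S, StrongVertex G u) ∧
      ∃ TS : Set (Set α),
        (∀ T ∈ TS, ∃ a b c : α, T = {a, b, c} ∧
            a ∉ S ∧ b ∉ S ∧ c ∉ S ∧
            G.Adj a b ∧ G.Adj b c ∧ G.Adj a c ∧ StrongTriangle G a b c) ∧
        ∀ u v : α, G.Adj u v → u ∉ S → v ∉ S →
          ∃! T, T ∈ TS ∧ u ∈ T ∧ v ∈ T := by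
  obtain ⟨P, hP, hPart⟩ := hL
  have hsame : ∀ {K K' e}, K ∈ P → K' ∈ P → e ∈ K → e ∈ K' → K = K' :=
    fun hK hK' he he' => (hPart _).unique ⟨hK, he⟩ ⟨hK', he'⟩
  -- The two ends of an isolated edge have the same star, so centres are chosen injectively.
  obtain ⟨S, hSP, hS⟩ := Set.exists_subset_bijOn (s := starEdges G ⁻¹' P) (f := starEdges G)
  have hS_out : ∀ {a b c x}, G.Adj a b → G.Adj b c → G.Adj a c → edgesIn G {a, b, c} ∈ P →
      x ∈ ({a, b, c} : Set α) → x ∉ S := fun {_ _ _ x} hab hbc hac hT hx hxS =>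
    let ⟨_, hex, heT⟩ := exists_mem_starEdges_mem_edgesIn_triangle hab hbc hx
    starEdges_ne_edgesIn_triangle hab hbc hac x (hsame (hSP hxS) hT hex heT)
  refine ⟨S, fun a ha b hb hab => ?_, fun a ha => strongCliqueSet_starEdges_iff.1 (hP _ (hSP ha)),
    {T | ∃ a b c, T = {a, b, c} ∧ G.Adj a b ∧ G.Adj b c ∧ G.Adj a c ∧ edgesIn G T ∈ P}, ?_, ?_⟩
  · have hab' : (⟨s(a, b), hab⟩ : G.edgeSet) ∈ starEdges G a ∩ starEdges G b := by simp
    exact hab.ne (hS.injOn ha hb (hsame (hSP ha) (hSP hb) hab'.1 hab'.2))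
  · rintro T ⟨a, b, c, rfl, hab, hbc, hac, hT⟩
    exact ⟨a, b, c, rfl, hS_out hab hbc hac hT (by simp), hS_out hab hbc hac hT (by simp),
      hS_out hab hbc hac hT (by simp), hab, hbc, hac,
      strongCliqueSet_edgesIn_triple_iff.1 (hP _ hT)⟩
  · intro u v huv hu hv
    obtain ⟨K, ⟨hK, heK⟩, -⟩ := hPart ⟨s(u, v), huv⟩
    rcases (hP K hK).eq_starEdges_or_eq_edgesIn_triangle with
      ⟨a, rfl⟩ | ⟨a, b, c, hab, hbc, hac, rfl⟩
    · obtain ⟨w, hwS, hw⟩ := hS.surjOn ⟨a, hK, rfl⟩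
      rw [← hw, mem_starEdges] at heK
      rcases Sym2.mem_iff.1 heK with rfl | rfl
      exacts [(hu hwS).elim, (hv hwS).elim]
    · refine ⟨{a, b, c}, ⟨⟨a, b, c, rfl, hab, hbc, hac, hK⟩, Set.mk_mem_sym2_iff.1 heK⟩, ?_⟩
      rintro _ ⟨⟨a', b', c', rfl, hab', hbc', hac', hT'⟩, hu', hv'⟩
      exact eq_of_edgesIn_triangle_eq hab' hbc' hac' hab hbc hac
        (hsame hT' hK (Set.mk_mem_sym2_iff.2 ⟨hu', hv'⟩) heK)

theorem localizableSet_lineGraph_of_strong_vertices_and_triangles (S : Set α)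
    (hind : ∀ u ∈ S, ∀ v ∈ S, ¬ G.Adj u v) (hstr : ∀ u ∈ S, StrongVertex G u)
    (TS : Set (Set α))
    (hTS : ∀ T ∈ TS, ∃ a b c : α, T = {a, b, c} ∧ a ∉ S ∧ b ∉ S ∧ c ∉ S ∧
        G.Adj a b ∧ G.Adj b c ∧ G.Adj a c ∧ StrongTriangle G a b c)
    (hdec : ∀ u v : α, G.Adj u v → u ∉ S → v ∉ S → ∃! T, T ∈ TS ∧ u ∈ T ∧ v ∈ T) :
    LocalizableSet G.lineGraph := by
  have hTS_out : ∀ T ∈ TS, ∀ x ∈ T, x ∉ S := by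
    intro T hT x hx
    obtain ⟨a, b, c, rfl, ha, hb, hc, -⟩ := hTS T hT
    rcases hx with rfl | rfl | rfl <;> assumption
  refine ⟨starEdges G '' S ∪ edgesIn G '' TS, ?_, fun e => ?_⟩
  · rintro K (⟨a, ha, rfl⟩ | ⟨T, hT, rfl⟩)
    · exact strongCliqueSet_starEdges_iff.2 (hstr a ha)
    · obtain ⟨a, b, c, rfl, -, -, -, -, -, -, hT⟩ := hTS T hT
      exact strongCliqueSet_edgesIn_triple_iff.2 hT
  by_cases heS : ∃ u ∈ S, u ∈ (e : Sym2 α)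
  · obtain ⟨u, hu, hue⟩ := heS
    refine ⟨starEdges G u, ⟨.inl ⟨u, hu, rfl⟩, hue⟩, ?_⟩
    rintro _ ⟨⟨w, hw, rfl⟩ | ⟨T, hT, rfl⟩, heK⟩
    · obtain rfl : w = u := by
        by_contra hwu
        refine hind u hu w hw ?_
        rw [← SimpleGraph.mem_edgeSet, ← (Sym2.mem_and_mem_iff (Ne.symm hwu)).1 ⟨hue, heK⟩]
        exact e.2
      rfl
    · exact (hTS_out T hT u (Set.mem_sym2_iff_subset.1 heK hue) hu).elim
  · push Not at heS
    obtain ⟨e, he⟩ := e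
    induction e using Sym2.ind with | _ u v => ?_
    obtain ⟨T, ⟨hT, huT, hvT⟩, hT_unique⟩ := hdec u v he
      (fun hu => heS u hu (Sym2.mem_mk_left u v)) (fun hv => heS v hv (Sym2.mem_mk_right u v))
    refine ⟨edgesIn G T, ⟨.inr ⟨T, hT, rfl⟩, Set.mk_mem_sym2_iff.2 ⟨huT, hvT⟩⟩, ?_⟩
    rintro _ ⟨⟨w, hw, rfl⟩ | ⟨T', hT', rfl⟩, heK⟩
    · exact (heS w hw heK).elim
    · rw [hT_unique T' ⟨hT', Set.mk_mem_sym2_iff.1 heK⟩]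

end LineGraph

theorem lineGraph_localizable_iff (H : SimpleGraph V) :
    LocalizableSet H.lineGraph ↔
      ∃ S : Set V,
        (∀ u ∈ S, ∀ v ∈ S, ¬ H.Adj u v) ∧
        (∀ u ∈ S, StrongVertex H u) ∧
        ∃ TS : Set (Set V),
          (∀ T ∈ TS, ∃ a b c : V, T = {a, b, c} ∧
              a ∉ S ∧ b ∉ S ∧ c ∉ S ∧
              H.Adj a b ∧ H.Adj b c ∧ H.Adj a c ∧ StrongTriangle H a b c) ∧
          ∀ u v : V, H.Adj u v → u ∉ S → v ∉ S →
            ∃! T, T ∈ TS ∧ u ∈ T ∧ v ∈ T :=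
  ⟨LocalizableSet.exists_strong_vertices_and_triangles,
    fun ⟨S, hind, hstr, TS, hTS, hdec⟩ =>
      localizableSet_lineGraph_of_strong_vertices_and_triangles S hind hstr TS hTS hdec⟩
end
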